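/- Let u_n be the normalized Maclaurin coefficients of e^{pz}·I_ν(z), i.e. u_n = Γ(ν+1) times the n-th Maclaurin coefficient of z ↦ e^{pz}·G_ν(z). Then u_0 = 1, u_1 = p, and for every natural number n ≥ 1, u_{n+1} = (p(2ν+2n+1)/((n+1)(2ν+n+1)))·u_n + ((1−p²)/((n+1)(2ν+n+1)))·u_{n−1}. -/

import Mathlib

/-!
Write `G = modBesselSeries ν`. Its coefficients satisfy `n (n + 2ν) g_n = g_{n-2}` (from
`Γ(s + 1) = s Γ(s)`), i.e. `z G'' + (2ν + 1) G' = z G`. Since `(e^{pz})' = p e^{pz}`, the product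
`F = e^{pz} G` satisfies `z F'' + (2ν + 1) F' = 2p z F' + p (2ν + 1) F + (1 - p²) z F`, and comparing
coefficients gives the three-term recurrence. The computation is carried out with
formal power series; the Maclaurin coefficients of the analytic function are matched with the formal
ones by the Leibniz rule, `G` being entire by the ratio test.
-/

open Complex

/-- The entire part of the modified Bessel function of the first kind:
`I_ν(z) = (z/2)^ν * modBesselSeries ν z`. -/
noncomputable def modBesselSeries (ν : ℂ) (z : ℂ) : ℂ :=
  ∑' k : ℕ, z ^ (2 * k) / (4 ^ k * (Nat.factorial k : ℂ) * Complex.Gamma (ν + (k : ℂ) + 1))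

/-- The normalized `n`-th Maclaurin coefficient of `h(z) * I_ν(z)`:
`Γ(ν+1)` times the `n`-th Maclaurin coefficient of `z ↦ h z * modBesselSeries ν z`. -/
noncomputable def normCoeff (ν : ℂ) (h : ℂ → ℂ) (n : ℕ) : ℂ :=
  Complex.Gamma (ν + 1) *
    (iteratedDeriv n (fun z => h z * modBesselSeries ν z) 0 / (Nat.factorial n : ℂ))

open PowerSeries Filter Topology FormalMultilinearSeries
open scoped Nat

section Derivation

variable {R A : Type*} [CommRing R] [CommRing A] [Algebra R A]

theorem Derivation.besselOde_mul_of_map_eq_smul (δ : Derivation R A A) {p c : R} {x E D : A}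
    (hE : δ E = p • E) (hD : x * δ (δ D) + c • δ D = x * D) :
    x * δ (δ (E * D)) + c • δ (E * D)
      = (2 * p) • (x * δ (E * D)) + (p * c) • (E * D) + (1 - p ^ 2) • (x * (E * D)) := by
  simp only [Derivation.leibniz, map_add, hE, smul_eq_mul, Algebra.smul_def,
    Derivation.map_algebraMap, map_mul, map_sub, map_one, map_pow, map_ofNat] at hD ⊢
  linear_combination E * hD

end Derivation

theorem PowerSeries.derivative_rescale {R : Type*} [CommRing R] (a : R) (f : R⟦X⟧) :
    d⁄dX R (rescale a f) = a • rescale a (d⁄dX R f) := by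
  ext n
  simp only [coeff_derivative, coeff_rescale, coeff_smul, smul_eq_mul, pow_succ]
  ring

theorem PowerSeries.derivative_rescale_exp {A : Type*} [CommRing A] [Algebra ℚ A] (a : A) :
    d⁄dX A (rescale a (exp A)) = a • rescale a (exp A) := by
  rw [derivative_rescale, derivative_exp]

theorem PowerSeries.coeff_add_two_of_ode {R : Type*} [CommRing R] {p c : R} {F : R⟦X⟧}
    (hF : X * d⁄dX R (d⁄dX R F) + c • d⁄dX R F
      = (2 * p) • (X * d⁄dX R F) + (p * c) • F + (1 - p ^ 2) • (X * F)) (m : ℕ) :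
    (m + 2) * (c + m + 1) * coeff (m + 2) F
      = p * (c + 2 * m + 2) * coeff (m + 1) F + (1 - p ^ 2) * coeff m F := by
  have h := congrArg (coeff (m + 1)) hF
  simp only [map_add, coeff_smul, coeff_succ_X_mul, coeff_derivative, smul_eq_mul] at h
  push_cast at h
  linear_combination h

section Expand

variable {𝕜 : Type*} [NontriviallyNormedField 𝕜] {q : ℕ} (hq : q ≠ 0) (g : 𝕜⟦X⟧)

theorem PowerSeries.coeff_expand_eq_zero_of_notMem_range {n : ℕ} (hn : n ∉ Set.range (q * ·)) :
    coeff n (expand q hq g) = 0 :=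
  coeff_expand_of_not_dvd q hq g fun ⟨k, hk⟩ ↦ hn ⟨k, hk.symm⟩

theorem radius_ofScalars_coeff_expand (h : (ofScalars 𝕜 (coeff · g)).radius = ⊤) :
    (ofScalars 𝕜 (coeff · (expand q hq g))).radius = ⊤ := by
  refine radius_eq_top_of_summable_norm _ fun r ↦ ?_
  simp only [ofScalars_norm]
  rw [← (mul_right_injective₀ hq).summable_iff fun n hn ↦ by
    simp [coeff_expand_eq_zero_of_notMem_range hq g hn]]
  have := (ofScalars 𝕜 (coeff · g)).summable_norm_mul_pow (r := r ^ q) (by simp [h])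
  simpa [ofScalars_norm, pow_mul, Function.comp_def] using this

theorem HasFPowerSeriesOnBall.comp_pow {f : 𝕜 → 𝕜}
    (hf : HasFPowerSeriesOnBall f (ofScalars 𝕜 (coeff · g)) 0 ⊤) :
    HasFPowerSeriesOnBall (fun z ↦ f (z ^ q)) (ofScalars 𝕜 (coeff · (expand q hq g))) 0 ⊤ where
  r_le := (radius_ofScalars_coeff_expand hq g (top_le_iff.mp hf.r_le)).ge
  r_pos := ENNReal.zero_lt_top
  hasSum {y} _ := by
    have := hf.hasSum (y := y ^ q) (by simp)
    simp only [ofScalars_apply_eq, smul_eq_mul, zero_add] at this ⊢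
    rw [← (mul_right_injective₀ hq).hasSum_iff fun n hn ↦ by
      simp [coeff_expand_eq_zero_of_notMem_range hq g hn]]
    simpa [pow_mul, Function.comp_def] using this

end Expand

section IteratedDeriv

variable {𝕜 : Type*} [NontriviallyNormedField 𝕜]

theorem HasFPowerSeriesOnBall.iteratedDeriv_eq_factorial_mul [CompleteSpace 𝕜] {f : 𝕜 → 𝕜}
    {c : ℕ → 𝕜} {x : 𝕜} {r : ENNReal} (hf : HasFPowerSeriesOnBall f (ofScalars 𝕜 c) x r)
    (n : ℕ) : iteratedDeriv n f x = n ! * c n := by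
  rw [iteratedDeriv_eq_iteratedFDeriv, ← hf.factorial_smul 1 n, ofScalars_apply_eq]
  simp [nsmul_eq_mul]

theorem iteratedDeriv_mul_eq_factorial_mul_coeff_mul {f g : 𝕜 → 𝕜} {x : 𝕜} {A B : 𝕜⟦X⟧} {n : ℕ}
    (hf : ContDiffAt 𝕜 n f x) (hg : ContDiffAt 𝕜 n g x)
    (hA : ∀ k ≤ n, iteratedDeriv k f x = k ! * coeff k A)
    (hB : ∀ k ≤ n, iteratedDeriv k g x = k ! * coeff k B) :
    iteratedDeriv n (fun z ↦ f z * g z) x = n ! * coeff n (A * B) := by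
  rw [iteratedDeriv_fun_mul hf hg, coeff_mul,
    Finset.Nat.sum_antidiagonal_eq_sum_range_succ (fun i j ↦ coeff i A * coeff j B), Finset.mul_sum]
  refine Finset.sum_congr rfl fun i hi ↦ ?_
  have hin : i ≤ n := Nat.lt_succ_iff.mp (Finset.mem_range.mp hi)
  rw [hA i hin, hB (n - i) (Nat.sub_le n i), ← Nat.choose_mul_factorial_mul_factorial hin]
  push_cast
  ring

end IteratedDeriv

noncomputable def besselCoeff (ν : ℂ) (k : ℕ) : ℂ := (4 ^ k * k ! * Gamma (ν + k + 1))⁻¹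

theorem besselCoeff_eq_mul_besselCoeff_succ {ν : ℂ} {k : ℕ} (h : ν + k + 1 ≠ 0) :
    besselCoeff ν k = 4 * (k + 1) * (ν + k + 1) * besselCoeff ν (k + 1) := by
  have hΓ : Gamma (ν + (k + 1 : ℕ) + 1) = (ν + k + 1) * Gamma (ν + k + 1) := by
    rw [← Gamma_add_one _ h]; push_cast; ring_nf
  simp only [besselCoeff, hΓ, Nat.factorial_succ, pow_succ, Nat.cast_mul, mul_inv]
  push_cast
  field_simp

theorem modBesselSeries_eq_tsum (ν z : ℂ) :
    modBesselSeries ν z = ∑' k, besselCoeff ν k * (z ^ 2) ^ k := by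
  simp only [modBesselSeries, besselCoeff, ← pow_mul, div_eq_mul_inv, mul_comm]

theorem eventually_one_lt_re_add_natCast_add_one (ν : ℂ) :
    ∀ᶠ k : ℕ in atTop, 1 < (ν + k + 1).re := by
  filter_upwards [tendsto_natCast_atTop_atTop.eventually_gt_atTop (-ν.re)] with k hk
  simp only [add_re, natCast_re, one_re]
  linarith

theorem tendsto_norm_besselCoeff_succ_div (ν : ℂ) :
    Tendsto (fun k ↦ ‖besselCoeff ν (k + 1)‖ / ‖besselCoeff ν k‖) atTop (𝓝 0) := by
  have hbound : ∀ᶠ k : ℕ in atTop,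
      ‖besselCoeff ν (k + 1)‖ / ‖besselCoeff ν k‖ ≤ 1 / ((k : ℝ) + 1) := by
    filter_upwards [eventually_one_lt_re_add_natCast_add_one ν] with k hk
    have hrec := congrArg norm (besselCoeff_eq_mul_besselCoeff_succ (ν := ν) (k := k)
      (by intro h; simp [h] at hk; linarith))
    have hnorm : 1 ≤ ‖ν + k + 1‖ := hk.le.trans (re_le_norm _)
    have hk1 : ‖(k : ℂ) + 1‖ = k + 1 := by exact_mod_cast Complex.norm_natCast (k + 1)
    simp only [norm_mul, RCLike.norm_ofNat, hk1] at hrec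
    apply div_le_of_le_mul₀ (norm_nonneg _) (by positivity)
    rw [hrec, show 1 / ((k : ℝ) + 1) * (4 * (k + 1) * ‖ν + k + 1‖ * ‖besselCoeff ν (k + 1)‖)
      = 4 * ‖ν + k + 1‖ * ‖besselCoeff ν (k + 1)‖ by field_simp]
    nlinarith [norm_nonneg (besselCoeff ν (k + 1))]
  exact squeeze_zero' (Eventually.of_forall fun _ ↦ by positivity) hbound
    tendsto_one_div_add_atTop_nhds_zero_nat

theorem radius_ofScalars_besselCoeff (ν : ℂ) :
    (ofScalars ℂ (besselCoeff ν)).radius = ⊤ := by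
  refine ofScalars_radius_eq_top_of_tendsto _ _ ?_
    (tendsto_norm_besselCoeff_succ_div ν)
  filter_upwards [eventually_one_lt_re_add_natCast_add_one ν] with k hk
  simp [besselCoeff, Gamma_ne_zero_of_re_pos (one_pos.trans hk), Nat.factorial_ne_zero]

noncomputable def besselPowerSeries (ν : ℂ) : ℂ⟦X⟧ := expand 2 two_ne_zero (mk (besselCoeff ν))

theorem coeff_besselPowerSeries_two_mul (ν : ℂ) (k : ℕ) :
    coeff (2 * k) (besselPowerSeries ν) = besselCoeff ν k := by
  simp [besselPowerSeries]

theorem coeff_besselPowerSeries_two_mul_add_one (ν : ℂ) (k : ℕ) :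
    coeff (2 * k + 1) (besselPowerSeries ν) = 0 :=
  coeff_expand_of_not_dvd 2 two_ne_zero _ (by omega)

theorem constantCoeff_besselPowerSeries (ν : ℂ) :
    constantCoeff (besselPowerSeries ν) = (Gamma (ν + 1))⁻¹ := by
  simp [besselPowerSeries, besselCoeff]

theorem hasFPowerSeriesOnBall_modBesselSeries (ν : ℂ) :
    HasFPowerSeriesOnBall (modBesselSeries ν)
      (ofScalars ℂ (coeff · (besselPowerSeries ν))) 0 ⊤ := by
  have h := (ofScalars ℂ (besselCoeff ν)).hasFPowerSeriesOnBall
    (by simp [radius_ofScalars_besselCoeff])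
  rw [radius_ofScalars_besselCoeff] at h
  have hG : modBesselSeries ν = fun z ↦ ofScalarsSum (besselCoeff ν) (z ^ 2) := by
    funext z
    rw [modBesselSeries_eq_tsum, ofScalars_sum_eq]
    rfl
  rw [hG]
  exact HasFPowerSeriesOnBall.comp_pow two_ne_zero (mk (besselCoeff ν))
    (by simp only [coeff_mk]; exact h)

theorem coeff_besselPowerSeries_add_two {ν : ℂ} (hν : ∀ k : ℕ, ν + k + 1 ≠ 0) (m : ℕ) :
    (m + 2) * (2 * ν + m + 2) * coeff (m + 2) (besselPowerSeries ν)
      = coeff m (besselPowerSeries ν) := by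
  obtain ⟨k, rfl | rfl⟩ := Nat.even_or_odd' m
  · rw [show 2 * k + 2 = 2 * (k + 1) by ring, coeff_besselPowerSeries_two_mul,
      coeff_besselPowerSeries_two_mul, besselCoeff_eq_mul_besselCoeff_succ (hν k)]
    push_cast
    ring
  · rw [show 2 * k + 1 + 2 = 2 * (k + 1) + 1 by ring, coeff_besselPowerSeries_two_mul_add_one,
      coeff_besselPowerSeries_two_mul_add_one, mul_zero]

theorem besselPowerSeries_ode {ν : ℂ} (hν : ∀ k : ℕ, ν + k + 1 ≠ 0) :
    X * d⁄dX ℂ (d⁄dX ℂ (besselPowerSeries ν)) + (2 * ν + 1) • d⁄dX ℂ (besselPowerSeries ν)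
      = X * besselPowerSeries ν := by
  ext n
  rcases n with _ | m
  · simp only [map_add, coeff_zero_X_mul, coeff_smul, coeff_derivative, smul_eq_mul]
    rw [coeff_besselPowerSeries_two_mul_add_one ν 0]
    ring
  · simp only [map_add, coeff_succ_X_mul, coeff_smul, coeff_derivative, smul_eq_mul]
    push_cast
    linear_combination coeff_besselPowerSeries_add_two hν m

noncomputable def expMulBesselPowerSeries (ν p : ℂ) : ℂ⟦X⟧ :=
  rescale p (PowerSeries.exp ℂ) * besselPowerSeries ν

theorem normCoeff_exp_mul_eq_coeff (ν p : ℂ) (n : ℕ) :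
    normCoeff ν (fun z ↦ Complex.exp (p * z)) n
      = Gamma (ν + 1) * coeff n (expMulBesselPowerSeries ν p) := by
  have hG := hasFPowerSeriesOnBall_modBesselSeries ν
  have hprod := iteratedDeriv_mul_eq_factorial_mul_coeff_mul (n := n) (x := 0)
    (f := fun z ↦ Complex.exp (p * z)) (A := rescale p (PowerSeries.exp ℂ))
    (B := besselPowerSeries ν) (by fun_prop) hG.analyticAt.contDiffAt
    (fun k _ ↦ by
      simp [coeff_rescale, coeff_exp, mul_left_comm _ (p ^ k), Nat.factorial_ne_zero])
    (fun k _ ↦ hG.iteratedDeriv_eq_factorial_mul k)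
  rw [normCoeff, hprod, mul_div_cancel_left₀ _ (by exact_mod_cast n.factorial_ne_zero),
    expMulBesselPowerSeries]

theorem constantCoeff_expMulBesselPowerSeries (ν p : ℂ) :
    constantCoeff (expMulBesselPowerSeries ν p) = (Gamma (ν + 1))⁻¹ := by
  have hE : constantCoeff (rescale p (PowerSeries.exp ℂ)) = 1 := by
    rw [← coeff_zero_eq_constantCoeff_apply, coeff_rescale]
    simp
  simp [expMulBesselPowerSeries, hE, constantCoeff_besselPowerSeries]

theorem coeff_one_expMulBesselPowerSeries (ν p : ℂ) :
    coeff 1 (expMulBesselPowerSeries ν p) = p * (Gamma (ν + 1))⁻¹ := by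
  simp [expMulBesselPowerSeries, coeff_mul, Finset.Nat.antidiagonal_succ, coeff_rescale,
    coeff_besselPowerSeries_two_mul_add_one ν 0, constantCoeff_besselPowerSeries]

theorem coeff_add_two_expMulBesselPowerSeries {ν : ℂ} (hν : ∀ k : ℕ, ν + k + 1 ≠ 0) (p : ℂ)
    (m : ℕ) :
    (m + 2) * (2 * ν + 1 + m + 1) * coeff (m + 2) (expMulBesselPowerSeries ν p)
      = p * (2 * ν + 1 + 2 * m + 2) * coeff (m + 1) (expMulBesselPowerSeries ν p)
        + (1 - p ^ 2) * coeff m (expMulBesselPowerSeries ν p) :=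
  coeff_add_two_of_ode ((d⁄dX ℂ).besselOde_mul_of_map_eq_smul (derivative_rescale_exp p)
    (besselPowerSeries_ode hν)) m

theorem exp_besselI_coeff_recurrence (ν p : ℂ) (hν : ∀ n : ℕ, 2 * ν + (n : ℂ) + 1 ≠ 0)
    (u : ℕ → ℂ) (hu : ∀ n, u n = normCoeff ν (fun z => Complex.exp (p * z)) n) :
    u 0 = 1 ∧ u 1 = p ∧ (∀ n : ℕ, 1 ≤ n →
      u (n + 1) = (p * (2 * ν + 2 * ((n : ℂ)) + 1) / ((((n : ℂ)) + 1) * (2 * ν + ((n : ℂ)) + 1))) * u n + ((1 - p ^ 2) / ((((n : ℂ)) + 1) * (2 * ν + ((n : ℂ)) + 1))) * u (n - 1)) := by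
  have hνk : ∀ k : ℕ, ν + k + 1 ≠ 0 := fun k h ↦
    hν (2 * k + 1) (by push_cast; linear_combination 2 * h)
  have hΓ : Gamma (ν + 1) ≠ 0 := Gamma_ne_zero fun m h ↦ hνk m (by linear_combination h)
  have hu' : ∀ n, u n = Gamma (ν + 1) * coeff n (expMulBesselPowerSeries ν p) := fun n ↦
    (hu n).trans (normCoeff_exp_mul_eq_coeff ν p n)
  refine ⟨?_, ?_, fun n hn ↦ ?_⟩
  · rw [hu', coeff_zero_eq_constantCoeff_apply, constantCoeff_expMulBesselPowerSeries,
      mul_inv_cancel₀ hΓ]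
  · rw [hu', coeff_one_expMulBesselPowerSeries, mul_left_comm, mul_inv_cancel₀ hΓ, mul_one]
  · obtain ⟨m, rfl⟩ := Nat.exists_eq_add_of_le' hn
    have hden : ((m + 1 : ℕ) + 1 : ℂ) * (2 * ν + (m + 1 : ℕ) + 1) ≠ 0 :=
      mul_ne_zero (Nat.cast_add_one_ne_zero _) (hν (m + 1))
    rw [Nat.add_sub_cancel, hu', hu', hu', div_mul_eq_mul_div, div_mul_eq_mul_div,
      ← add_div, eq_div_iff hden]
    push_cast
    linear_combination Gamma (ν + 1) * coeff_add_two_expMulBesselPowerSeries hνk p m
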